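/- Let A be a normal ordered subgroupoid of an ordered groupoid G, let g,h ∈ G with g⁻¹g ≃_A hh⁻¹, and let (a,p) be an A-nexus between g⁻¹g and hh⁻¹. Set g' = (g | a𝐝) (the corestriction of g to a𝐝) and h' = (p𝐝 | h) (the restriction of h to p𝐝). Then g'ah ≃_A gp⁻¹h'. Moreover, if (a₁,p₁) is another A-nexus between g⁻¹g and hh⁻¹, with g'₁ = (g | a₁𝐝) and h'₁ = (p₁𝐝 | h), then g'₁a₁h ≃_A g'ah and gp⁻¹h' ≃_A gp₁⁻¹h'₁. -/
import Mathlib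


/-!  A one-sorted algebraic formalization of ordered groupoids (Ehresmann / Lawson style).
Arrows form the carrier; composition `g * h` is "defined" when `g⁻¹ * g = h * h⁻¹`,
and is junk otherwise.  `res f g` is the restriction `(f|g)` of axiom (OG3). -/

universe u v w u'

class OGroupoid (G : Type u) extends PartialOrder G, Mul G, Inv G where
  gpd_assoc : ∀ g h k : G, g⁻¹ * g = h * h⁻¹ → h⁻¹ * h = k * k⁻¹ →
      (g * h) * k = g * (h * k)
  gpd_inv_inv : ∀ g : G, g⁻¹⁻¹ = g
  gpd_mul_inv_rev : ∀ g h : G, g⁻¹ * g = h * h⁻¹ → (g * h)⁻¹ = h⁻¹ * g⁻¹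
  gpd_dom_mul : ∀ g h : G, g⁻¹ * g = h * h⁻¹ → (g * h) * (g * h)⁻¹ = g * g⁻¹
  gpd_ran_mul : ∀ g h : G, g⁻¹ * g = h * h⁻¹ → (g * h)⁻¹ * (g * h) = h⁻¹ * h
  gpd_id_left : ∀ g : G, g * g⁻¹ * g = g
  gpd_id_right : ∀ g : G, g * (g⁻¹ * g) = g
  ord_inv : ∀ g h : G, g ≤ h → g⁻¹ ≤ h⁻¹
  ord_mul : ∀ g₁ g₂ h₁ h₂ : G, g₁ ≤ g₂ → h₁ ≤ h₂ →
      g₁⁻¹ * g₁ = h₁ * h₁⁻¹ → g₂⁻¹ * g₂ = h₂ * h₂⁻¹ → g₁ * h₁ ≤ g₂ * h₂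
  res : G → G → G
  res_dom : ∀ f g : G, f * f⁻¹ = f → f ≤ g * g⁻¹ → res f g * (res f g)⁻¹ = f
  res_le : ∀ f g : G, f * f⁻¹ = f → f ≤ g * g⁻¹ → res f g ≤ g
  res_unique : ∀ f g k : G, f * f⁻¹ = f → f ≤ g * g⁻¹ → k * k⁻¹ = f → k ≤ g →
      k = res f g

namespace OGroupoid

variable {G : Type u} [OGroupoid G]

/-- The domain identity `g𝐝 = g * g⁻¹`. -/
def dm (g : G) : G := g * g⁻¹

/-- The range identity `g𝐫 = g⁻¹ * g`. -/
def rn (g : G) : G := g⁻¹ * g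

/-- The composition `g * h` is defined. -/
def Cmp (g h : G) : Prop := g⁻¹ * g = h * h⁻¹

/-- `e` is an identity of the groupoid. -/
def IsId (e : G) : Prop := e * e⁻¹ = e

/-- The corestriction `(g|f) = (f|g⁻¹)⁻¹` for an identity `f ≤ g𝐫`. -/
def cor (g f : G) : G := (res f g⁻¹)⁻¹

end OGroupoid

open OGroupoid

/-- An ordered functor between ordered groupoids. -/
structure OFunctor (G : Type u) (H : Type v) [OGroupoid G] [OGroupoid H] where
  toFun : G → H
  map_mul : ∀ g h : G, Cmp g h → toFun (g * h) = toFun g * toFun h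
  map_inv : ∀ g : G, toFun g⁻¹ = (toFun g)⁻¹
  map_le : ∀ g h : G, g ≤ h → toFun g ≤ toFun h

namespace OFunctor

variable {G : Type u} {H : Type v} [OGroupoid G] [OGroupoid H]

/-- Star-surjectivity: `φ` is a fibration of ordered groupoids. -/
def StarSurjective (φ : OFunctor G H) : Prop :=
  ∀ e : G, IsId e → ∀ h : H, dm h = φ.toFun e → ∃ g : G, dm g = e ∧ φ.toFun g = h

/-- Star-injectivity: `φ` is an immersion of ordered groupoids. -/
def StarInjective (φ : OFunctor G H) : Prop :=
  ∀ g k : G, dm g = dm k → φ.toFun g = φ.toFun k → g = k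

/-- A covering is a star-bijective ordered functor. -/
def IsCovering (φ : OFunctor G H) : Prop := StarSurjective φ ∧ StarInjective φ

/-- The kernel of an ordered functor. -/
def ker (φ : OFunctor G H) : Set G := {g : G | IsId (φ.toFun g)}

end OFunctor

namespace OGroupoid

variable {G : Type u} [OGroupoid G]

/-- `A` is a subgroupoid: closed under inversion and (defined) composition. -/
def IsSubgroupoid (A : Set G) : Prop :=
  (∀ a ∈ A, a⁻¹ ∈ A) ∧ ∀ a ∈ A, ∀ b ∈ A, Cmp a b → a * b ∈ A

/-- `A` is a normal ordered subgroupoid of `G`: a wide subgroupoid, closed under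
restriction, and closed under conjugation `h⁻¹ a k` whenever `h` and `k` have a
common upper bound in `G`. -/
def IsNormalOSub (A : Set G) : Prop :=
  IsSubgroupoid A ∧
  (∀ e : G, IsId e → e ∈ A) ∧
  (∀ a ∈ A, ∀ e : G, IsId e → e ≤ dm a → res e a ∈ A) ∧
  (∀ a ∈ A, ∀ h k : G, (∃ g : G, h ≤ g ∧ k ≤ g) → dm h = dm a → rn a = dm k →
      h⁻¹ * a * k ∈ A)

/-- The relation `g ≃_A h`: there are `a, b, c, d ∈ A` with `a g b` and `c h d`
defined, `a g b ≤ h` and `c h d ≤ g`. -/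
def simA (A : Set G) (g h : G) : Prop :=
  (∃ a ∈ A, ∃ b ∈ A, Cmp a g ∧ Cmp g b ∧ a * g * b ≤ h) ∧
  (∃ c ∈ A, ∃ d ∈ A, Cmp c h ∧ Cmp h d ∧ c * h * d ≤ g)

/-- The relation inducing the order on `≃_A`-classes: `[g] ≤ [k]` iff there are
`a, b ∈ A` with `a g b` defined and `a g b ≤ k`. -/
def leA (A : Set G) (g k : G) : Prop :=
  ∃ a ∈ A, ∃ b ∈ A, Cmp a g ∧ Cmp g b ∧ a * g * b ≤ k

/-- An `A`-nexus between identities `e` and `f`: a pair `(a,p)` of arrows of `A`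
with `a𝐝 ≤ e`, `a𝐫 = f`, `p𝐝 ≤ f`, `p𝐫 = e`. -/
def IsNexus (A : Set G) (a p e f : G) : Prop :=
  a ∈ A ∧ p ∈ A ∧ dm a ≤ e ∧ rn a = f ∧ dm p ≤ f ∧ rn p = e

end OGroupoid

namespace OGroupoid

variable {G : Type u} [OGroupoid G]

lemma dm_def (g : G) : dm g = g * g⁻¹ := rfl
lemma rn_def (g : G) : rn g = g⁻¹ * g := rfl
lemma cmp_iff {g h : G} : Cmp g h ↔ rn g = dm h := Iff.rfl

lemma inv_inv' (g : G) : g⁻¹⁻¹ = g := gpd_inv_inv g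

lemma cmp_self_inv (g : G) : Cmp g g⁻¹ := by
  show g⁻¹ * g = g⁻¹ * g⁻¹⁻¹; rw [inv_inv']

lemma cmp_inv_self (g : G) : Cmp g⁻¹ g := by
  show g⁻¹⁻¹ * g⁻¹ = g * g⁻¹; rw [inv_inv']

lemma dm_mul {g h : G} (hc : Cmp g h) : dm (g * h) = dm g :=
  gpd_dom_mul g h hc

lemma rn_mul {g h : G} (hc : Cmp g h) : rn (g * h) = rn h :=
  gpd_ran_mul g h hc

lemma mul_inv' {g h : G} (hc : Cmp g h) : (g * h)⁻¹ = h⁻¹ * g⁻¹ :=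
  gpd_mul_inv_rev g h hc

lemma dm_inv (g : G) : dm g⁻¹ = rn g := by
  show g⁻¹ * g⁻¹⁻¹ = g⁻¹ * g; rw [inv_inv']

lemma rn_inv (g : G) : rn g⁻¹ = dm g := by
  show g⁻¹⁻¹ * g⁻¹ = g * g⁻¹; rw [inv_inv']

lemma isId_dm (g : G) : IsId (dm g) := gpd_dom_mul g g⁻¹ (cmp_self_inv g)

lemma isId_rn (g : G) : IsId (rn g) := by
  have := gpd_dom_mul g⁻¹ g (cmp_inv_self g)
  show (g⁻¹ * g) * (g⁻¹ * g)⁻¹ = g⁻¹ * g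
  rw [this, inv_inv']

lemma IsId.inv_eq {e : G} (he : IsId e) : e⁻¹ = e := by
  calc e⁻¹ = (e * e⁻¹)⁻¹ := by rw [he]
    _ = e⁻¹⁻¹ * e⁻¹ := mul_inv' (cmp_self_inv e)
    _ = e * e⁻¹ := by rw [inv_inv']
    _ = e := he

lemma IsId.dm_eq {e : G} (he : IsId e) : dm e = e := he

lemma IsId.rn_eq {e : G} (he : IsId e) : rn e = e := by
  show e⁻¹ * e = e
  rw [he.inv_eq]; nth_rewrite 2 [← he.inv_eq]
  exact he

lemma dm_mul_self (g : G) : dm g * g = g := gpd_id_left g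

lemma mul_rn_self (g : G) : g * rn g = g := gpd_id_right g

lemma mul_assoc' {g h k : G} (h1 : Cmp g h) (h2 : Cmp h k) :
    (g * h) * k = g * (h * k) := gpd_assoc g h k h1 h2

lemma inv_mul_cancel_left' {g h : G} (hc : Cmp g h) : g⁻¹ * (g * h) = h := by
  rw [← mul_assoc' (cmp_inv_self g) hc]
  show (rn g) * h = h
  rw [cmp_iff.1 hc, dm_mul_self]

lemma mul_inv_cancel_right' {g h : G} (hc : Cmp g h) : (g * h) * h⁻¹ = g := by
  rw [mul_assoc' hc (cmp_self_inv h)]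
  show g * dm h = g
  rw [← cmp_iff.1 hc, mul_rn_self]

/-- `g * (g⁻¹ * k) = k` when `dm k = dm g`. -/
lemma mul_inv_mul_cancel {g k : G} (h : dm k = dm g) : g * (g⁻¹ * k) = k := by
  have hc : Cmp g⁻¹ k := by rw [cmp_iff, rn_inv, h]
  rw [← mul_assoc' (cmp_self_inv g) hc]
  show dm g * k = k
  rw [← h, dm_mul_self]

lemma le_dm_dm {u g : G} (h : u ≤ g) : dm u ≤ dm g :=
  ord_mul u g u⁻¹ g⁻¹ h (ord_inv u g h) (cmp_self_inv u) (cmp_self_inv g)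

lemma le_rn_rn {u g : G} (h : u ≤ g) : rn u ≤ rn g :=
  ord_mul u⁻¹ g⁻¹ u g (ord_inv u g h) h (cmp_inv_self u) (cmp_inv_self g)

section Res
variable {f g : G}

lemma res_dm (hf : IsId f) (hle : f ≤ dm g) : dm (res f g) = f := res_dom f g hf hle
lemma res_le' (hf : IsId f) (hle : f ≤ dm g) : res f g ≤ g := res_le f g hf hle

lemma res_unique' {k : G} (hf : IsId f) (hle : f ≤ dm g) (hk : dm k = f) (hkg : k ≤ g) :
    k = res f g := res_unique f g k hf hle hk hkg

lemma cor_rn (hf : IsId f) (hle : f ≤ rn g) : rn (cor g f) = f := by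
  have : f ≤ dm g⁻¹ := by rwa [dm_inv]
  show rn (res f g⁻¹)⁻¹ = f
  rw [rn_inv]; exact res_dm hf this

lemma cor_le (hf : IsId f) (hle : f ≤ rn g) : cor g f ≤ g := by
  have : f ≤ dm g⁻¹ := by rwa [dm_inv]
  have h2 := ord_inv _ _ (res_le' hf this)
  rwa [inv_inv'] at h2

lemma cor_unique {k : G} (hf : IsId f) (hle : f ≤ rn g) (hk : rn k = f) (hkg : k ≤ g) :
    k = cor g f := by
  have h1 : f ≤ dm g⁻¹ := by rwa [dm_inv]
  have h2 : dm k⁻¹ = f := by rwa [dm_inv]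
  have := res_unique' hf h1 h2 (ord_inv _ _ hkg)
  show k = (res f g⁻¹)⁻¹
  rw [← this, inv_inv']

end Res

lemma res_mul {u v f : G} (hc : Cmp u v) (hf : IsId f) (hle : f ≤ dm u) :
    res f (u * v) = res f u * res (rn (res f u)) v := by
  set u' := res f u with hu'
  have hu'le : u' ≤ u := res_le' hf hle
  have hu'dm : dm u' = f := res_dm hf hle
  have h1 : IsId (rn u') := isId_rn u'
  have h2 : rn u' ≤ dm v := by
    rw [← cmp_iff.1 hc]; exact le_rn_rn hu'le
  set v' := res (rn u') v with hv'
  have hv'le : v' ≤ v := res_le' h1 h2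
  have hv'dm : dm v' = rn u' := res_dm h1 h2
  have hcuv : Cmp u' v' := by rw [cmp_iff, hv'dm]
  have hle2 : u' * v' ≤ u * v := ord_mul _ _ _ _ hu'le hv'le hcuv hc
  have hdm : dm (u' * v') = f := by rw [dm_mul hcuv, hu'dm]
  have hfle : f ≤ dm (u * v) := by rw [dm_mul hc]; exact hle
  exact (res_unique' hf hfle hdm hle2).symm

lemma cor_mul {u v f : G} (hc : Cmp u v) (hf : IsId f) (hle : f ≤ rn v) :
    cor (u * v) f = cor u (dm (cor v f)) * cor v f := by
  set v' := cor v f with hv'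
  have hv'le : v' ≤ v := cor_le hf hle
  have hv'rn : rn v' = f := cor_rn hf hle
  have h1 : IsId (dm v') := isId_dm v'
  have h2 : dm v' ≤ rn u := by
    rw [cmp_iff.1 hc]; exact le_dm_dm hv'le
  set u' := cor u (dm v') with hu'
  have hu'le : u' ≤ u := cor_le h1 h2
  have hu'rn : rn u' = dm v' := cor_rn h1 h2
  have hcuv : Cmp u' v' := hu'rn
  have hle2 : u' * v' ≤ u * v := ord_mul _ _ _ _ hu'le hv'le hcuv hc
  have hrn : rn (u' * v') = f := by rw [rn_mul hcuv, hv'rn]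
  have hfle : f ≤ rn (u * v) := by rw [rn_mul hc]; exact hle
  exact (cor_unique hf hfle hrn hle2).symm

section Normal
variable {A : Set G}

lemma memA_inv (hA : IsNormalOSub A) {a : G} (ha : a ∈ A) : a⁻¹ ∈ A := hA.1.1 a ha
lemma memA_mul (hA : IsNormalOSub A) {a b : G} (ha : a ∈ A) (hb : b ∈ A) (hc : Cmp a b) : a * b ∈ A :=
  hA.1.2 a ha b hb hc
lemma memA_id (hA : IsNormalOSub A) {e : G} (he : IsId e) : e ∈ A := hA.2.1 e he
lemma memA_res (hA : IsNormalOSub A) {a e : G} (ha : a ∈ A) (he : IsId e) (hle : e ≤ dm a) :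
    res e a ∈ A := hA.2.2.1 a ha e he hle
lemma memA_cor (hA : IsNormalOSub A) {a f : G} (ha : a ∈ A) (hf : IsId f) (hle : f ≤ rn a) :
    cor a f ∈ A := by
  have : f ≤ dm a⁻¹ := by rwa [dm_inv]
  exact memA_inv hA (memA_res hA (memA_inv hA ha) hf this)

end Normal

end OGroupoid
namespace OGroupoid

variable {G : Type u} [OGroupoid G]

lemma key_nexus {A : Set G} (hA : IsNormalOSub A) (g h a p : G)
    (hnx : IsNexus A a p (rn g) (dm h)) :
    simA A (cor g (dm a) * a * h) (g * p⁻¹ * res (dm p) h) := by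
  obtain ⟨haA, hpA, hadm, harn, hpdm, hprn⟩ := hnx
  have hia : IsId (dm a) := isId_dm a
  have hip : IsId (dm p) := isId_dm p
  set g' := cor g (dm a) with hg'def
  have hg'le : g' ≤ g := cor_le hia hadm
  have hg'rn : rn g' = dm a := cor_rn hia hadm
  have hc1 : Cmp g' a := hg'rn
  have hc2 : Cmp (g' * a) h := by rw [cmp_iff, rn_mul hc1, harn]
  set h' := res (dm p) h with hh'def
  have hh'le : h' ≤ h := res_le' hip hpdm
  have hh'dm : dm h' = dm p := res_dm hip hpdm
  have hc3 : Cmp g p⁻¹ := by rw [cmp_iff, dm_inv, hprn]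
  have hc4 : Cmp (g * p⁻¹) h' := by rw [cmp_iff, rn_mul hc3, rn_inv, hh'dm]
  set x := g' * a * h with hxdef
  set y := g * p⁻¹ * h' with hydef
  have hdmx : dm x = dm g' := by rw [hxdef, dm_mul hc2, dm_mul hc1]
  have hrnx : rn x = rn h := by rw [hxdef, rn_mul hc2]
  have hdmy : dm y = dm g := by rw [hydef, dm_mul hc4, dm_mul hc3]
  have hrny : rn y = rn h' := by rw [hydef, rn_mul hc4]
  constructor
  · -- leA x y
    have hq1 : dm a ≤ dm p⁻¹ := by rw [dm_inv, hprn]; exact hadm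
    set q := res (dm a) p⁻¹ with hqdef
    have hqle : q ≤ p⁻¹ := res_le' hia hq1
    have hqdm : dm q = dm a := res_dm hia hq1
    have hqA : q ∈ A := memA_res hA (memA_inv hA hpA) hia hq1
    have hiq : IsId (rn q) := isId_rn q
    have hq2 : rn q ≤ dm h' := by
      have h5 := le_rn_rn hqle
      rwa [rn_inv, ← hh'dm] at h5
    set h₂ := res (rn q) h' with hh2def
    have hh2le : h₂ ≤ h' := res_le' hiq hq2
    have hh2dm : dm h₂ = rn q := res_dm hiq hq2
    have hcgq : Cmp g' q := by rw [cmp_iff, hg'rn, hqdm]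
    have hcqh2 : Cmp q h₂ := by rw [cmp_iff, hh2dm]
    have hcq2 : Cmp (g' * q) h₂ := by rw [cmp_iff, rn_mul hcgq, hh2dm]
    set w := (g' * q) * h₂ with hwdef
    have hwley : w ≤ y :=
      ord_mul _ _ _ _ (ord_mul _ _ _ _ hg'le hqle hcgq hc3) hh2le hcq2 hc4
    set c₀ := a⁻¹ * q with hc0def
    have hc0a : Cmp a⁻¹ q := by rw [cmp_iff, rn_inv, hqdm]
    have hc0A : c₀ ∈ A := memA_mul hA (memA_inv hA haA) hqA hc0a
    have hdmc0 : dm c₀ = dm h := by rw [hc0def, dm_mul hc0a, dm_inv, harn]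
    have hrnc0 : rn c₀ = dm h₂ := by rw [hc0def, rn_mul hc0a, hh2dm]
    set d := (h⁻¹ * c₀) * h₂ with hddef
    have hdA : d ∈ A :=
      hA.2.2.2 c₀ hc0A h h₂ ⟨h, le_refl h, le_trans hh2le hh'le⟩ hdmc0.symm hrnc0
    have hch1 : Cmp h⁻¹ c₀ := by rw [cmp_iff, rn_inv, hdmc0]
    have hch2 : Cmp (h⁻¹ * c₀) h₂ := by rw [cmp_iff, rn_mul hch1, hrnc0]
    have hch1' : Cmp h (h⁻¹ * c₀) := by
      rw [cmp_iff, dm_mul hch1, dm_inv]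
    have hchd : Cmp h d := by
      rw [cmp_iff, hddef, dm_mul hch2, dm_mul hch1, dm_inv]
    have hcxd : Cmp x d := by rw [cmp_iff, hrnx, cmp_iff.1 hchd]
    have hcainvZ : Cmp a⁻¹ (q * h₂) := by
      rw [cmp_iff, rn_inv, dm_mul hcqh2, hqdm]
    have hcg'a_ainv : Cmp (g' * a) a⁻¹ := by rw [cmp_iff, rn_mul hc1, dm_inv]
    have hxd : x * d = w := by
      calc x * d = (g' * a) * (h * d) := mul_assoc' hc2 hchd
        _ = (g' * a) * ((h * (h⁻¹ * c₀)) * h₂) := by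
              rw [hddef, ← mul_assoc' hch1' hch2]
        _ = (g' * a) * (c₀ * h₂) := by rw [mul_inv_mul_cancel hdmc0]
        _ = (g' * a) * (a⁻¹ * (q * h₂)) := by
              rw [hc0def, mul_assoc' hc0a hcqh2]
        _ = ((g' * a) * a⁻¹) * (q * h₂) := (mul_assoc' hcg'a_ainv hcainvZ).symm
        _ = g' * (q * h₂) := by rw [mul_inv_cancel_right' hc1]
        _ = w := (mul_assoc' hcgq hcqh2).symm
    refine ⟨dm x, memA_id hA (isId_dm x), d, hdA, (isId_dm x).rn_eq, hcxd, ?_⟩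
    rw [dm_mul_self, hxd]
    exact hwley
  · -- leA y x
    have hp1 : dm p ≤ rn a := by rw [harn]; exact hpdm
    set a₀ := cor a (dm p) with ha0def
    have ha0le : a₀ ≤ a := cor_le hip hp1
    have ha0rn : rn a₀ = dm p := cor_rn hip hp1
    have ha0A : a₀ ∈ A := memA_cor hA haA hip hp1
    have hia0 : IsId (dm a₀) := isId_dm a₀
    have hp2 : dm a₀ ≤ rn g' := by rw [hg'rn]; exact le_dm_dm ha0le
    set g₀ := cor g' (dm a₀) with hg0def
    have hg0le : g₀ ≤ g' := cor_le hia0 hp2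
    have hg0rn : rn g₀ = dm a₀ := cor_rn hia0 hp2
    have hcg0a0 : Cmp g₀ a₀ := hg0rn
    have hca0h' : Cmp a₀ h' := by rw [cmp_iff, ha0rn, hh'dm]
    have hc5 : Cmp (g₀ * a₀) h' := by rw [cmp_iff, rn_mul hcg0a0, ha0rn, hh'dm]
    set v := (g₀ * a₀) * h' with hvdef
    have hvlex : v ≤ x :=
      ord_mul _ _ _ _ (ord_mul _ _ _ _ hg0le ha0le hcg0a0 hc1) hh'le hc5 hc2
    have hrnv : rn v = rn h' := by rw [hvdef, rn_mul hc5]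
    set b := a₀ * p with hbdef
    have hcb : Cmp a₀ p := ha0rn
    have hbA : b ∈ A := memA_mul hA ha0A hpA hcb
    have hdmb : dm b = dm a₀ := dm_mul hcb
    have hrnb : rn b = rn g := by rw [hbdef, rn_mul hcb, hprn]
    have hcg0b : Cmp g₀ b := by rw [cmp_iff, hg0rn, hdmb]
    have hcbg : Cmp (g₀ * b) g⁻¹ := by rw [cmp_iff, rn_mul hcg0b, hrnb, dm_inv]
    set c := (g₀ * b) * g⁻¹ with hcdef
    have hcA : c ∈ A := by
      have h6 : (g₀⁻¹)⁻¹ * b * g⁻¹ ∈ A := by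
        refine hA.2.2.2 b hbA g₀⁻¹ g⁻¹
          ⟨g⁻¹, ord_inv _ _ (le_trans hg0le hg'le), le_refl g⁻¹⟩ ?_ ?_
        · rw [dm_inv, hg0rn, hdmb]
        · rw [hrnb, dm_inv]
      rwa [inv_inv'] at h6
    have hccy : Cmp c y := by
      rw [cmp_iff, hcdef, rn_mul hcbg, rn_inv, hdmy]
    have hcginvy : Cmp g⁻¹ y := by rw [cmp_iff, rn_inv, hdmy]
    have hcginv_gp : Cmp g⁻¹ (g * p⁻¹) := by
      rw [cmp_iff, rn_inv, dm_mul hc3]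
    have hcp_ph : Cmp p (p⁻¹ * h') := by
      have : Cmp p⁻¹ h' := by rw [cmp_iff, rn_inv, hh'dm]
      rw [cmp_iff, dm_mul this, dm_inv]
    have hcpinvh' : Cmp p⁻¹ h' := by rw [cmp_iff, rn_inv, hh'dm]
    have hcb_ph : Cmp b (p⁻¹ * h') := by
      rw [cmp_iff, hrnb, dm_mul hcpinvh', dm_inv, hprn]
    have hcy : c * y = v := by
      calc c * y = (g₀ * b) * (g⁻¹ * y) := mul_assoc' hcbg hcginvy
        _ = (g₀ * b) * ((g⁻¹ * (g * p⁻¹)) * h') := by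
              rw [hydef, ← mul_assoc' hcginv_gp hc4]
        _ = (g₀ * b) * (p⁻¹ * h') := by rw [inv_mul_cancel_left' hc3]
        _ = g₀ * (b * (p⁻¹ * h')) := mul_assoc' hcg0b hcb_ph
        _ = g₀ * (a₀ * (p * (p⁻¹ * h'))) := by
              rw [hbdef, mul_assoc' hcb hcp_ph]
        _ = g₀ * (a₀ * h') := by rw [mul_inv_mul_cancel hh'dm]
        _ = v := (mul_assoc' hcg0a0 hca0h').symm
    refine ⟨c, hcA, rn y, memA_id hA (isId_rn y), hccy, ?_, ?_⟩
    · rw [cmp_iff, (isId_rn y).dm_eq]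
    · rw [hcy, hrny, ← hrnv, mul_rn_self]
      exact hvlex

end OGroupoid
namespace OGroupoid

variable {G : Type u} [OGroupoid G]

lemma simA_iff {A : Set G} {g h : G} : simA A g h ↔ leA A g h ∧ leA A h g :=
  Iff.rfl

lemma leA_trans {A : Set G} (hA : IsNormalOSub A) {u v w : G}
    (h1 : leA A u v) (h2 : leA A v w) : leA A u w := by
  obtain ⟨a, haA, b, hbA, hcau, hcub, hle1⟩ := h1
  obtain ⟨c, hcA, d, hdA, hccv, hcvd, hle2⟩ := h2
  have hcaub : Cmp (a * u) b := by rw [cmp_iff, rn_mul hcau, cmp_iff.1 hcub]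
  set s := (a * u) * b with hsdef
  have hdms : dm s = dm a := by rw [hsdef, dm_mul hcaub, dm_mul hcau]
  have hrns : rn s = rn b := by rw [hsdef, rn_mul hcaub]
  have his : IsId (dm s) := isId_dm s
  have hirs : IsId (rn s) := isId_rn s
  have hsc : dm s ≤ rn c := by rw [cmp_iff.1 hccv]; exact le_dm_dm hle1
  have hsd : rn s ≤ dm d := by rw [← cmp_iff.1 hcvd]; exact le_rn_rn hle1
  set c' := cor c (dm s) with hc'def
  have hc'le : c' ≤ c := cor_le his hsc
  have hc'rn : rn c' = dm s := cor_rn his hsc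
  have hc'A : c' ∈ A := memA_cor hA hcA his hsc
  set d' := res (rn s) d with hd'def
  have hd'le : d' ≤ d := res_le' hirs hsd
  have hd'dm : dm d' = rn s := res_dm hirs hsd
  have hd'A : d' ∈ A := memA_res hA hdA hirs hsd
  have hcc'a : Cmp c' a := by rw [cmp_iff, hc'rn, hdms]
  have hcbd' : Cmp b d' := by rw [cmp_iff, hd'dm, hrns]
  have hcc's : Cmp c' s := by rw [cmp_iff, hc'rn]
  have hcc'au : Cmp c' (a * u) := by rw [cmp_iff, hc'rn, hdms, ← dm_mul hcau]
  have hcc'au' : Cmp (c' * a) u := by rw [cmp_iff, rn_mul hcc'a, cmp_iff.1 hcau]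
  have hcs_d' : Cmp (c' * s) d' := by rw [cmp_iff, rn_mul hcc's, hd'dm]
  have hcv_d : Cmp (c * v) d := by rw [cmp_iff, rn_mul hccv, cmp_iff.1 hcvd]
  have hcu_bd' : Cmp u (b * d') := by rw [cmp_iff, dm_mul hcbd', cmp_iff.1 hcub]
  have hcc'au_b : Cmp (c' * (a * u)) b := by
    rw [cmp_iff, rn_mul hcc'au, rn_mul hcau, cmp_iff.1 hcub]
  refine ⟨c' * a, memA_mul hA hc'A haA hcc'a, b * d', memA_mul hA hbA hd'A hcbd',
    hcc'au', hcu_bd', ?_⟩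
  have key : ((c' * a) * u) * (b * d') = (c' * s) * d' := by
    calc ((c' * a) * u) * (b * d')
        = (c' * (a * u)) * (b * d') := by rw [mul_assoc' hcc'a hcau]
      _ = ((c' * (a * u)) * b) * d' := (mul_assoc' hcc'au_b hcbd').symm
      _ = (c' * s) * d' := by rw [hsdef, mul_assoc' hcc'au hcaub]
  rw [key]
  calc (c' * s) * d' ≤ (c * v) * d :=
        ord_mul _ _ _ _ (ord_mul _ _ _ _ hc'le hle1 hcc's hccv) hd'le hcs_d' hcv_d
    _ ≤ w := hle2

lemma simA_symm {A : Set G} {g h : G} (h1 : simA A g h) : simA A h g :=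
  ⟨h1.2, h1.1⟩

lemma simA_trans {A : Set G} (hA : IsNormalOSub A) {g h k : G}
    (h1 : simA A g h) (h2 : simA A h k) : simA A g k :=
  ⟨leA_trans hA h1.1 h2.1, leA_trans hA h2.2 h1.2⟩

end OGroupoid

/-- **Statement 10.** Let `(a,p)` be an `A`-nexus between `g⁻¹g` and `hh⁻¹`, and set
`g' = (g|a𝐝)` (corestriction) and `h' = (p𝐝|h)` (restriction).  Then
`g'ah ≃_A gp⁻¹h'`, and for any other nexus `(a₁,p₁)` with associated `g'₁, h'₁` we
have `g'₁a₁h ≃_A g'ah` and `gp⁻¹h' ≃_A gp₁⁻¹h'₁`. -/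
theorem nexus_composition_well_defined {G : Type u} [OGroupoid G] (A : Set G)
    (hA : IsNormalOSub A) (g h a p : G)
    (hsim : simA A (rn g) (dm h))
    (hnx : IsNexus A a p (rn g) (dm h)) :
    simA A (cor g (dm a) * a * h) (g * p⁻¹ * res (dm p) h) ∧
    ∀ a₁ p₁ : G, IsNexus A a₁ p₁ (rn g) (dm h) →
      simA A (cor g (dm a₁) * a₁ * h) (cor g (dm a) * a * h) ∧
      simA A (g * p⁻¹ * res (dm p) h) (g * p₁⁻¹ * res (dm p₁) h) := by
  have base := OGroupoid.key_nexus hA g h a p hnx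
  refine ⟨base, fun a₁ p₁ hnx₁ => ?_⟩
  obtain ⟨haA, hpA, hadm, harn, hpdm, hprn⟩ := hnx
  obtain ⟨haA₁, hpA₁, hadm₁, harn₁, hpdm₁, hprn₁⟩ := hnx₁
  have k1 := OGroupoid.key_nexus hA g h a₁ p ⟨haA₁, hpA, hadm₁, harn₁, hpdm, hprn⟩
  have k2 := OGroupoid.key_nexus hA g h a p₁ ⟨haA, hpA₁, hadm, harn, hpdm₁, hprn₁⟩
  exact ⟨OGroupoid.simA_trans hA k1 (OGroupoid.simA_symm base),
    OGroupoid.simA_trans hA (OGroupoid.simA_symm base) k2⟩
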